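/- Theorem 14 (progressive-heteronomous graphs): a finite digraph G contains a contour — a directed cycle possessing both an entry edge and an exit edge — if and only if for every natural number M there exists j > M such that the iterated line digraph L^j(G) contains a complicated vertex; i.e., G has no heteronomous bound: complicated vertices (and hence increases of the cyclomatic number at the next step) keep arising at arbitrarily late converting steps. -/

import Mathlib

universe u

/-- The line digraph of a digraph `G`: vertices are the edges of `G`. -/
def lineDigraph {V : Type u} (G : Digraph V) : Digraph {e : V × V // G.Adj e.1 e.2} where
  Adj e f := e.1.2 = f.1.1

instance {V : Type u} (G : Digraph V) [Fintype V] [DecidableRel G.Adj] :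
    Fintype {e : V × V // G.Adj e.1 e.2} :=
  Subtype.fintype _

instance {V : Type u} (G : Digraph V) [DecidableEq V] :
    DecidableRel (lineDigraph G).Adj :=
  fun e f => inferInstanceAs (Decidable (e.1.2 = f.1.1))

/-- The finset of (directed) edges of `G`. -/
def edgeFinset {V : Type u} (G : Digraph V) [Fintype V] [DecidableRel G.Adj] :
    Finset (V × V) :=
  Finset.univ.filter (fun p => G.Adj p.1 p.2)

/-- The indegree of a vertex. -/
def indeg {V : Type u} (G : Digraph V) [Fintype V] [DecidableRel G.Adj] (v : V) : ℕ :=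
  (Finset.univ.filter (fun u => G.Adj u v)).card

/-- The outdegree of a vertex. -/
def outdeg {V : Type u} (G : Digraph V) [Fintype V] [DecidableRel G.Adj] (v : V) : ℕ :=
  (Finset.univ.filter (fun w => G.Adj v w)).card

/-- The cyclomatic number `ν(G) = |E| - |V| + 1`, as an integer. -/
def cyclomatic {V : Type u} (G : Digraph V) [Fintype V] [DecidableRel G.Adj] : ℤ :=
  ((edgeFinset G).card : ℤ) - (Fintype.card V : ℤ) + 1

/-- A directed walk of length `k` in `G`. -/
def IsWalk {V : Type u} (G : Digraph V) {k : ℕ} (w : Fin (k + 1) → V) : Prop :=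
  ∀ i : Fin k, G.Adj (w i.castSucc) (w i.succ)

instance {V : Type u} (G : Digraph V) [DecidableRel G.Adj] {k : ℕ} :
    DecidablePred (IsWalk G (k := k)) :=
  fun w => inferInstanceAs (Decidable (∀ i : Fin k, G.Adj (w i.castSucc) (w i.succ)))

/-- A bundled finite digraph. -/
structure FinDigraph where
  V : Type
  [fin : Fintype V]
  [deq : DecidableEq V]
  G : Digraph V
  [dec : DecidableRel G.Adj]

attribute [instance] FinDigraph.fin FinDigraph.deq FinDigraph.dec

/-- One straight-converting step: the bundled line digraph. -/
def FinDigraph.line (H : FinDigraph) : FinDigraph where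
  V := {e : H.V × H.V // H.G.Adj e.1 e.2}
  G := lineDigraph H.G

/-- The `j`-fold iterated line digraph. -/
def FinDigraph.iterLine (H : FinDigraph) : ℕ → FinDigraph
  | 0 => H
  | j + 1 => (H.iterLine j).line

/-- Canonical: every vertex simple. -/
def FinDigraph.Canonical (H : FinDigraph) : Prop :=
  ∀ v : H.V, indeg H.G v ≤ 1 ∨ outdeg H.G v ≤ 1

/-- Contains a complicated vertex. -/
def FinDigraph.HasComplicated (H : FinDigraph) : Prop :=
  ∃ v : H.V, 2 ≤ indeg H.G v ∧ 2 ≤ outdeg H.G v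

/-- An `l₃₁`-interval of length `ℓ`. -/
def IsL31 {V : Type u} (G : Digraph V) [Fintype V] [DecidableRel G.Adj] {ℓ : ℕ}
    (w : Fin (ℓ + 1) → V) : Prop :=
  IsWalk G w ∧ 2 ≤ indeg G (w 0) ∧ 2 ≤ outdeg G (w (Fin.last ℓ)) ∧
    ∀ i : Fin (ℓ + 1), 0 < (i : ℕ) → (i : ℕ) < ℓ →
      indeg G (w i) = 1 ∧ outdeg G (w i) = 1

/-- A directed cycle of length `k`. -/
def IsCycle {V : Type u} (G : Digraph V) {k : ℕ} (w : Fin (k + 1) → V) : Prop :=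
  IsWalk G w ∧ w 0 = w (Fin.last k) ∧
    ∀ i j : Fin (k + 1), (i : ℕ) < k → (j : ℕ) < k → w i = w j → i = j

/-- `G` has a contour: a directed cycle with both an entry edge and an exit edge. -/
def HasContour {V : Type u} (G : Digraph V) : Prop :=
  ∃ (k : ℕ) (w : Fin (k + 2) → V), IsCycle G (k := k + 1) w ∧
    (∃ a b : V, G.Adj a b ∧ (∃ i, w i = b) ∧
      ¬ ∃ i : Fin (k + 1), w i.castSucc = a ∧ w i.succ = b) ∧
    (∃ a b : V, G.Adj a b ∧ (∃ i, w i = a) ∧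
      ¬ ∃ i : Fin (k + 1), w i.castSucc = a ∧ w i.succ = b)

section Degrees

variable {V : Type u} {G : Digraph V} [Fintype V] [DecidableRel G.Adj]

lemma two_le_indeg_iff {v : V} :
    2 ≤ indeg G v ↔ ∃ u₁ u₂, G.Adj u₁ v ∧ G.Adj u₂ v ∧ u₁ ≠ u₂ := by
  change 1 < _ ↔ _
  simp [indeg, Finset.one_lt_card]

lemma two_le_outdeg_iff {v : V} :
    2 ≤ outdeg G v ↔ ∃ w₁ w₂, G.Adj v w₁ ∧ G.Adj v w₂ ∧ w₁ ≠ w₂ := by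
  change 1 < _ ↔ _
  simp [outdeg, Finset.one_lt_card]

lemma exists_adj_ne_of_two_le_indeg {v : V} (h : 2 ≤ indeg G v) (p : V) :
    ∃ u, G.Adj u v ∧ u ≠ p := by
  obtain ⟨u₁, u₂, h₁, h₂, hne⟩ := two_le_indeg_iff.mp h
  by_cases hp : u₁ = p
  · exact ⟨u₂, h₂, hp ▸ hne.symm⟩
  · exact ⟨u₁, h₁, hp⟩

lemma exists_adj_ne_of_two_le_outdeg {v : V} (h : 2 ≤ outdeg G v) (p : V) :
    ∃ w, G.Adj v w ∧ w ≠ p := by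
  obtain ⟨w₁, w₂, h₁, h₂, hne⟩ := two_le_outdeg_iff.mp h
  by_cases hp : w₁ = p
  · exact ⟨w₂, h₂, hp ▸ hne.symm⟩
  · exact ⟨w₁, h₁, hp⟩

variable [DecidableEq V]

lemma indeg_lineDigraph (e : {e : V × V // G.Adj e.1 e.2}) :
    indeg (lineDigraph G) e = indeg G e.1.1 := by
  rw [indeg, indeg, ← Fintype.card_subtype, ← Fintype.card_subtype]
  exact Fintype.card_congr
    { toFun := fun f => ⟨f.1.1.1, f.2 ▸ f.1.2⟩
      invFun := fun u => ⟨⟨(u.1, e.1.1), u.2⟩, rfl⟩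
      left_inv := fun f => Subtype.ext <| Subtype.ext <| Prod.ext rfl f.2.symm
      right_inv := fun _ => rfl }

lemma outdeg_lineDigraph (e : {e : V × V // G.Adj e.1 e.2}) :
    outdeg (lineDigraph G) e = outdeg G e.1.2 := by
  rw [outdeg, outdeg, ← Fintype.card_subtype, ← Fintype.card_subtype]
  exact Fintype.card_congr
    { toFun := fun f => ⟨f.1.1.2, f.2 ▸ f.1.2⟩
      invFun := fun w => ⟨⟨(e.1.2, w.1), w.2⟩, rfl⟩
      left_inv := fun f => Subtype.ext <| Subtype.ext <| Prod.ext f.2 rfl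
      right_inv := fun _ => rfl }

end Degrees

def HasMergeSplitWalk {V : Type u} (G : Digraph V) [Fintype V] [DecidableRel G.Adj]
    (n : ℕ) : Prop :=
  ∃ w : ℕ → V, (∀ i < n, G.Adj (w i) (w (i + 1))) ∧ 2 ≤ indeg G (w 0) ∧ 2 ≤ outdeg G (w n)

lemma hasMergeSplitWalk_lineDigraph_iff {V : Type u} {G : Digraph V} [Fintype V]
    [DecidableEq V] [DecidableRel G.Adj] {n : ℕ} :
    HasMergeSplitWalk (lineDigraph G) n ↔ HasMergeSplitWalk G (n + 1) := by
  constructor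
  · rintro ⟨w, hw, hin, hout⟩
    refine ⟨fun | 0 => (w 0).1.1 | i + 1 => (w i).1.2, ?_, ?_, ?_⟩
    · rintro (_ | i) hi
      · exact (w 0).2
      · change G.Adj (w i).1.2 (w (i + 1)).1.2
        rw [hw i (by omega)]
        exact (w (i + 1)).2
    · rwa [← indeg_lineDigraph]
    · rwa [← outdeg_lineDigraph]
  · rintro ⟨w, hw, hin, hout⟩
    refine ⟨fun i => ⟨(w (min i n), w (min i n + 1)), hw _ (by omega)⟩, ?_, ?_, ?_⟩
    · intro i hi
      change w (min i n + 1) = w (min (i + 1) n)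
      rw [Nat.min_eq_left hi.le, Nat.min_eq_left hi]
    · rwa [indeg_lineDigraph]
    · rw [outdeg_lineDigraph]
      simpa only [Nat.min_self] using hout

lemma FinDigraph.hasMergeSplitWalk_iterLine_iff (H : FinDigraph) (j n : ℕ) :
    HasMergeSplitWalk (H.iterLine j).G n ↔ HasMergeSplitWalk H.G (n + j) := by
  induction j generalizing n with
  | zero => rfl
  | succ j ih =>
    rw [← Nat.add_assoc, Nat.add_right_comm, ← ih]
    exact hasMergeSplitWalk_lineDigraph_iff

lemma FinDigraph.hasComplicated_iff (H : FinDigraph) :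
    H.HasComplicated ↔ HasMergeSplitWalk H.G 0 :=
  ⟨fun ⟨v, hin, hout⟩ => ⟨fun _ => v, nofun, hin, hout⟩,
    fun ⟨w, _, hin, hout⟩ => ⟨w 0, hin, hout⟩⟩

lemma FinDigraph.hasComplicated_iterLine_iff (H : FinDigraph) (j : ℕ) :
    (H.iterLine j).HasComplicated ↔ HasMergeSplitWalk H.G j := by
  rw [hasComplicated_iff, hasMergeSplitWalk_iterLine_iff, Nat.zero_add]

section Cycles

variable {V : Type u} {G : Digraph V} {k : ℕ} {w : Fin (k + 2) → V}

def IsCycleEdge (w : Fin (k + 2) → V) (a b : V) : Prop :=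
  ∃ i : Fin (k + 1), w i.castSucc = a ∧ w i.succ = b

variable (G) in
def HasEntry (w : Fin (k + 2) → V) : Prop :=
  ∃ a b, G.Adj a b ∧ (∃ i, w i = b) ∧ ¬ IsCycleEdge w a b

variable (G) in
def HasExit (w : Fin (k + 2) → V) : Prop :=
  ∃ a b, G.Adj a b ∧ (∃ i, w i = a) ∧ ¬ IsCycleEdge w a b

namespace IsCycle

variable (hw : IsCycle G (k := k + 1) w)
include hw

lemma castSucc_injective : Function.Injective fun i : Fin (k + 1) => w i.castSucc :=
  fun i j h => Fin.castSucc_injective _ (hw.2.2 _ _ i.isLt j.isLt h)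

lemma apply_succ (i : Fin (k + 1)) : w i.succ = w (i + 1).castSucc := by
  induction i using Fin.lastCases with
  | last => rw [Fin.succ_last, Fin.last_add_one, Fin.castSucc_zero, hw.2.1]
  | cast j => rw [Fin.succ_castSucc, Fin.coeSucc_eq_succ]

lemma succ_injective : Function.Injective fun i : Fin (k + 1) => w i.succ := by
  intro i j h
  refine add_right_cancel (b := 1) (hw.castSucc_injective ?_)
  simpa only [hw.apply_succ] using h

lemma exists_castSucc_eq (i : Fin (k + 2)) : ∃ j : Fin (k + 1), w j.castSucc = w i := by
  induction i using Fin.lastCases with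
  | last => exact ⟨0, hw.2.1⟩
  | cast j => exact ⟨j, rfl⟩

lemma exists_succ_eq (i : Fin (k + 2)) : ∃ j : Fin (k + 1), w j.succ = w i := by
  induction i using Fin.cases with
  | zero => exact ⟨Fin.last k, hw.2.1.symm⟩
  | succ j => exact ⟨j, rfl⟩

variable [Fintype V] [DecidableRel G.Adj]

lemma two_le_indeg_of_not_isCycleEdge {u : V} {i : Fin (k + 2)} (hu : G.Adj u (w i))
    (hnot : ¬ IsCycleEdge w u (w i)) : 2 ≤ indeg G (w i) := by
  obtain ⟨j, hj⟩ := hw.exists_succ_eq i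
  exact two_le_indeg_iff.mpr ⟨u, w j.castSucc, hu, hj ▸ hw.1 j, fun h => hnot ⟨j, h.symm, hj⟩⟩

lemma two_le_outdeg_of_not_isCycleEdge {v : V} {i : Fin (k + 2)} (hv : G.Adj (w i) v)
    (hnot : ¬ IsCycleEdge w (w i) v) : 2 ≤ outdeg G (w i) := by
  obtain ⟨j, hj⟩ := hw.exists_castSucc_eq i
  exact two_le_outdeg_iff.mpr ⟨v, w j.succ, hv, hj ▸ hw.1 j, fun h => hnot ⟨j, hj, h.symm⟩⟩

lemma hasEntry_iff : HasEntry G w ↔ ∃ i, 2 ≤ indeg G (w i) := by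
  constructor
  · rintro ⟨u, _, hu, ⟨i, rfl⟩, hnot⟩
    exact ⟨i, hw.two_le_indeg_of_not_isCycleEdge hu hnot⟩
  · rintro ⟨i, hi⟩
    obtain ⟨j, hj⟩ := hw.exists_succ_eq i
    obtain ⟨u, hu, hne⟩ := exists_adj_ne_of_two_le_indeg hi (w j.castSucc)
    refine ⟨u, w i, hu, ⟨i, rfl⟩, fun ⟨j', hj'u, hj'i⟩ => hne ?_⟩
    rw [← hj'u, hw.succ_injective (hj'i.trans hj.symm)]

lemma hasExit_iff : HasExit G w ↔ ∃ i, 2 ≤ outdeg G (w i) := by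
  constructor
  · rintro ⟨_, v, hv, ⟨i, rfl⟩, hnot⟩
    exact ⟨i, hw.two_le_outdeg_of_not_isCycleEdge hv hnot⟩
  · rintro ⟨i, hi⟩
    obtain ⟨j, hj⟩ := hw.exists_castSucc_eq i
    obtain ⟨v, hv, hne⟩ := exists_adj_ne_of_two_le_outdeg hi (w j.succ)
    refine ⟨w i, v, hv, ⟨i, rfl⟩, fun ⟨j', hj'i, hj'v⟩ => hne ?_⟩
    rw [← hj'v, hw.castSucc_injective (hj'i.trans hj.symm)]

end IsCycle

lemma hasContour_iff_exists_isCycle [Fintype V] [DecidableRel G.Adj] :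
    HasContour G ↔ ∃ (k : ℕ) (w : Fin (k + 2) → V), IsCycle G (k := k + 1) w ∧
      (∃ i, 2 ≤ indeg G (w i)) ∧ ∃ i, 2 ≤ outdeg G (w i) := by
  refine exists_congr fun k => exists_congr fun w => ?_
  exact ⟨fun ⟨hw, hin, hout⟩ => ⟨hw, hw.hasEntry_iff.mp hin, hw.hasExit_iff.mp hout⟩,
    fun ⟨hw, hin, hout⟩ => ⟨hw, hw.hasEntry_iff.mpr hin, hw.hasExit_iff.mpr hout⟩⟩

end Cycles

section Walks

variable {V : Type u} {G : Digraph V}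

lemma exists_lt_le_eq_of_card_lt [Fintype V] {j : ℕ} (w : ℕ → V) (hj : Fintype.card V < j) :
    ∃ a b, a < b ∧ b ≤ j ∧ w a = w b := by
  obtain ⟨a, ha, b, hb, hne, heq⟩ := Finset.exists_ne_map_eq_of_card_lt_of_maps_to
    (s := Finset.range (j + 1)) (t := Finset.univ) (f := w)
    (by simpa using hj.trans j.lt_succ_self) (fun _ _ => Finset.mem_coe.mpr (Finset.mem_univ _))
  rw [Finset.mem_range] at ha hb
  rcases Nat.lt_or_gt_of_ne hne with hab | hab
  · exact ⟨a, b, hab, by omega, heq⟩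
  · exact ⟨b, a, hab, by omega, heq.symm⟩

variable {w : ℕ → V} {j : ℕ}

lemma exists_isCycle_of_walk (hw : ∀ n < j, G.Adj (w n) (w (n + 1))) {a b : ℕ} (hab : a < b)
    (hbj : b ≤ j) (heq : w a = w b) :
    ∃ k s, s + (k + 1) ≤ j ∧ IsCycle G (k := k + 1) fun i : Fin (k + 2) => w (s + i) := by
  classical
  have hex : ∃ k s, s + (k + 1) ≤ j ∧ w s = w (s + (k + 1)) :=
    ⟨b - a - 1, a, by omega, by rwa [show a + (b - a - 1 + 1) = b by omega]⟩
  obtain ⟨s, hsj, hs⟩ := Nat.find_spec hex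
  set k := Nat.find hex
  -- a repetition inside `[s, s + k]` would be a shorter closed walk
  have hinj : ∀ x y, s ≤ x → x < y → y < s + (k + 1) → w x ≠ w y := fun x y hsx hxy hy h =>
    Nat.find_min hex (m := y - x - 1) (by omega)
      ⟨x, by omega, by rwa [show x + (y - x - 1 + 1) = y by omega]⟩
  refine ⟨k, s, hsj, fun i => hw (s + i) (by omega), by simpa using hs, fun i i' hi hi' h => ?_⟩
  rcases Nat.lt_trichotomy i i' with hii' | hii' | hii'
  · exact absurd h (hinj _ _ (by omega) (by omega) (by omega))
  · exact Fin.ext hii'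
  · exact absurd h.symm (hinj _ _ (by omega) (by omega) (by omega))

variable [Fintype V] [DecidableRel G.Adj]

lemma exists_hasMergeSplitWalk_of_periodic {c : ℕ → V} {L : ℕ} (hL : 0 < L)
    (hper : Function.Periodic c L) (hc : ∀ m, G.Adj (c m) (c (m + 1))) {q₁ q₂ : ℕ}
    (hin : 2 ≤ indeg G (c q₁)) (hout : 2 ≤ outdeg G (c q₂)) (M : ℕ) :
    ∃ j, M < j ∧ HasMergeSplitWalk G j := by
  set N := q₁ + M + 1
  have hN : N ≤ N * L := Nat.le_mul_of_pos_right N hL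
  refine ⟨q₂ + N * L - q₁, by omega, fun n => c (q₁ + n), fun n _ => hc _, hin, ?_⟩
  change 2 ≤ outdeg G (c (q₁ + (q₂ + N * L - q₁)))
  have hperN : c (q₂ + N * L) = c q₂ := by simpa using hper.nat_mul N q₂
  rwa [show q₁ + (q₂ + N * L - q₁) = q₂ + N * L by omega, hperN]

open Fin.NatCast in
lemma exists_hasMergeSplitWalk_of_hasContour (h : HasContour G) (M : ℕ) :
    ∃ j, M < j ∧ HasMergeSplitWalk G j := by
  obtain ⟨k, w, hw, ⟨i₁, hin⟩, ⟨i₂, hout⟩⟩ := hasContour_iff_exists_isCycle.mp h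
  obtain ⟨j₁, hj₁⟩ := hw.exists_castSucc_eq i₁
  obtain ⟨j₂, hj₂⟩ := hw.exists_castSucc_eq i₂
  let c : ℕ → V := fun m => w (m : Fin (k + 1)).castSucc
  have hper : Function.Periodic c (k + 1) := fun m => by simp [c]
  have hc : ∀ m, G.Adj (c m) (c (m + 1)) := fun m => by
    simpa [c, ← hw.apply_succ] using hw.1 (m : Fin (k + 1))
  refine exists_hasMergeSplitWalk_of_periodic k.succ_pos hper hc (q₁ := j₁) (q₂ := j₂) ?_ ?_ M
  · simpa [c, hj₁] using hin
  · simpa [c, hj₂] using hout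

variable {k : ℕ} {c : Fin (k + 2) → V}

lemma IsCycle.exists_two_le_indeg_of_walk (hc : IsCycle G (k := k + 1) c)
    (hw : ∀ n < j, G.Adj (w n) (w (n + 1))) {n₀ : ℕ} (hn₀ : n₀ ≤ j) (hmem : w n₀ ∈ Set.range c)
    (hin : 2 ≤ indeg G (w 0)) : ∃ i, 2 ≤ indeg G (c i) := by
  classical
  have hex : ∃ n, w n ∈ Set.range c := ⟨n₀, hmem⟩
  have hle : Nat.find hex ≤ n₀ := Nat.find_min' hex hmem
  obtain ⟨i, hi⟩ := Nat.find_spec hex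
  refine ⟨i, ?_⟩
  rcases hn : Nat.find hex with _ | m
  · rwa [hi, hn]
  · have hout : w m ∉ Set.range c := Nat.find_min hex (by omega)
    have hadj : G.Adj (w m) (c i) := hi ▸ hn ▸ hw m (by omega)
    exact hc.two_le_indeg_of_not_isCycleEdge hadj fun ⟨i', h, _⟩ => hout ⟨_, h⟩

lemma IsCycle.exists_two_le_outdeg_of_walk (hc : IsCycle G (k := k + 1) c)
    (hw : ∀ n < j, G.Adj (w n) (w (n + 1))) {n₀ : ℕ} (hn₀ : n₀ ≤ j) (hmem : w n₀ ∈ Set.range c)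
    (hout : 2 ≤ outdeg G (w j)) : ∃ i, 2 ≤ outdeg G (c i) := by
  classical
  set P : ℕ → Prop := fun n => w n ∈ Set.range c
  set p := Nat.findGreatest P j
  have hpj : p ≤ j := Nat.findGreatest_le j
  obtain ⟨i, hi⟩ : P p := Nat.findGreatest_spec hn₀ hmem
  refine ⟨i, ?_⟩
  rcases hpj.eq_or_lt with hp | hp
  · rwa [hi, hp]
  · have hnext : w (p + 1) ∉ Set.range c := Nat.findGreatest_is_greatest p.lt_succ_self hp
    have hadj : G.Adj (c i) (w (p + 1)) := hi ▸ hw p hp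
    exact hc.two_le_outdeg_of_not_isCycleEdge hadj fun ⟨i', _, h⟩ => hnext ⟨_, h⟩

lemma hasContour_of_hasMergeSplitWalk (hj : Fintype.card V < j) (h : HasMergeSplitWalk G j) :
    HasContour G := by
  obtain ⟨w, hw, hin, hout⟩ := h
  obtain ⟨a, b, hab, hbj, heq⟩ := exists_lt_le_eq_of_card_lt w hj
  obtain ⟨k, s, hsj, hc⟩ := exists_isCycle_of_walk hw hab hbj heq
  have hmem : w s ∈ Set.range fun i : Fin (k + 2) => w (s + i) := ⟨0, rfl⟩
  exact hasContour_iff_exists_isCycle.mpr ⟨k, _, hc,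
    hc.exists_two_le_indeg_of_walk hw (by omega) hmem hin,
    hc.exists_two_le_outdeg_of_walk hw (by omega) hmem hout⟩

end Walks

/-- Theorem 14: `G` contains a contour iff complicated vertices
arise in the iterated line digraphs at arbitrarily late steps. -/
theorem progressive_heteronomous (H : FinDigraph) :
    HasContour H.G ↔
      ∀ M : ℕ, ∃ j : ℕ, M < j ∧ (H.iterLine j).HasComplicated := by
  constructor
  · intro h M
    obtain ⟨j, hMj, hj⟩ := exists_hasMergeSplitWalk_of_hasContour h M
    exact ⟨j, hMj, (H.hasComplicated_iterLine_iff j).mpr hj⟩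
  · intro h
    obtain ⟨j, hj, hc⟩ := h (Fintype.card H.V)
    exact hasContour_of_hasMergeSplitWalk hj ((H.hasComplicated_iterLine_iff j).mp hc)
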